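/- Let Θ be a nonempty type, V₀ : Θ → ℝ, V : Θ → ℝ^m, c ∈ ℝ^m, L(θ, λ) = V₀(θ) + ∑_{i=1}^m λᵢ (Vᵢ(θ) − cᵢ), and d(λ) = sup_{θ ∈ Θ} L(θ, λ), assumed finite for all λ ≥ 0. Let δ ≥ 0 and θ† : ℝ^m → Θ satisfy d(λ) ≤ L(θ†(λ), λ) + δ for all λ ≥ 0, and suppose ‖V(θ†(λ)) − c‖² ≤ B for all λ ≥ 0. Fix η > 0, let λ* ≥ 0 attain inf_{λ ≥ 0} d(λ), and define the iterates λ₀ = 0, λ_{k+1} = [λ_k − η (V(θ†(λ_k)) − c)]₊, where [·]₊ is the coordinatewise positive part. Then for every ε > 0 there exists K ∈ ℕ with K ≤ ‖λ₀ − λ*‖² / (2ηε) such that d(λ_K) ≤ d(λ*) + ηB/2 + δ + ε. -/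

import Mathlib

/-!
The Lagrangian is affine in `λ` with gradient `V(θ) − c`, so the approximate maximiser `θ†(λ)`
yields a `δ`-subgradient of the dual function `d` at `λ`. Projection onto the nonnegative orthant
does not increase the distance to `λ*`, hence
`‖λₖ₊₁ − λ*‖² ≤ ‖λₖ − λ*‖² − 2η (d(λₖ) − d(λ*) − δ) + η² B`.
As long as `d(λₖ) > d(λ*) + ηB/2 + δ + ε`, the squared distance therefore drops by at least
`2ηε` per step, which cannot go on for all `k ≤ ‖λ₀ − λ*‖²/(2ηε)`.
-/

open Finset

section Descent

variable {S u : ℕ → ℝ} {a ε : ℝ}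

lemma le_sub_mul_of_descent (ha : 0 ≤ a) (hstep : ∀ k, S (k + 1) ≤ S k - a * u k) :
    ∀ n : ℕ, (∀ k < n, ε ≤ u k) → S n ≤ S 0 - a * ε * n := by
  intro n
  induction n with
  | zero => intro; simp
  | succ n ih =>
    intro hu
    have hun : a * ε ≤ a * u n := mul_le_mul_of_nonneg_left (hu n n.lt_succ_self) ha
    have hSn := ih fun k hk => hu k (hk.trans n.lt_succ_self)
    push_cast
    linarith [hstep n]

lemma exists_le_of_descent (hS : ∀ k, 0 ≤ S k) (ha : 0 < a) (hε : 0 < ε)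
    (hstep : ∀ k, S (k + 1) ≤ S k - a * u k) :
    ∃ K : ℕ, (K : ℝ) ≤ S 0 / (a * ε) ∧ u K ≤ ε := by
  by_contra! hlarge
  set N := ⌊S 0 / (a * ε)⌋₊ + 1
  have hu : ∀ k < N, ε ≤ u k := fun k hk =>
    (hlarge k ((Nat.cast_le.mpr (Nat.lt_succ_iff.mp hk)).trans
      (Nat.floor_le (div_nonneg (hS 0) (by positivity))))).le
  have hN : S 0 / (a * ε) < N := by
    simpa [N] using Nat.lt_floor_add_one (S 0 / (a * ε))
  have hN' : S 0 < a * ε * N := by rwa [div_lt_iff₀' (by positivity)] at hN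
  linarith [le_sub_mul_of_descent ha.le hstep N hu, hS N]

end Descent

lemma norm_sub_sq_le_of_projected_step {E : Type*}
    [NormedAddCommGroup E] [InnerProductSpace ℝ E]
    {x x' y g : E} {η s B : ℝ} (hη : 0 ≤ η)
    (hproj : ‖x' - y‖ ^ 2 ≤ ‖x - η • g - y‖ ^ 2)
    (hsub : s ≤ inner ℝ (x - y) g) (hB : ‖g‖ ^ 2 ≤ B) :
    ‖x' - y‖ ^ 2 ≤ ‖x - y‖ ^ 2 - 2 * η * s + η ^ 2 * B := by
  have hexpand : ‖x - η • g - y‖ ^ 2 =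
      ‖x - y‖ ^ 2 - 2 * η * inner ℝ (x - y) g + η ^ 2 * ‖g‖ ^ 2 := by
    rw [sub_right_comm, norm_sub_sq_real, inner_smul_right, norm_smul, mul_pow,
      Real.norm_eq_abs, sq_abs]
    ring
  nlinarith [mul_le_mul_of_nonneg_left hsub hη, mul_le_mul_of_nonneg_left hB (sq_nonneg η)]

lemma EuclideanSpace.norm_sub_sq_le_of_eq_max_zero {ι : Type*} [Fintype ι]
    {x y z : EuclideanSpace ℝ ι} (hy : ∀ i, y i = max (x i) 0) (hz : ∀ i, 0 ≤ z i) :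
    ‖y - z‖ ^ 2 ≤ ‖x - z‖ ^ 2 := by
  simp only [EuclideanSpace.real_norm_sq_eq, PiLp.sub_apply]
  refine sum_le_sum fun i _ => sq_le_sq.mpr ?_
  simpa only [hy, max_eq_left (hz i)] using abs_max_sub_max_le_abs (x i) (z i) 0

noncomputable section Lagrangian

variable {Θ ι : Type*} [Fintype ι] (V₀ : Θ → ℝ) (V : Θ → ι → ℝ) (c : ι → ℝ)

def lagrangian (θ : Θ) (l : EuclideanSpace ℝ ι) : ℝ := V₀ θ + ∑ i, l i * (V θ i - c i)

def dualFunction (l : EuclideanSpace ℝ ι) : ℝ :=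
  sSup (Set.range fun θ => lagrangian V₀ V c θ l)

def constraintSlack (θ : Θ) : EuclideanSpace ℝ ι := WithLp.toLp 2 fun i => V θ i - c i

variable {V₀ V c}

lemma lagrangian_sub_lagrangian (θ : Θ) (l l' : EuclideanSpace ℝ ι) :
    lagrangian V₀ V c θ l - lagrangian V₀ V c θ l' =
      inner ℝ (l - l') (constraintSlack V c θ) := by
  simp only [lagrangian, constraintSlack, PiLp.inner_apply, PiLp.sub_apply, RCLike.inner_apply,
    conj_trivial]
  rw [add_sub_add_left_eq_sub, ← sum_sub_distrib]
  exact sum_congr rfl fun i _ => by ring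

lemma dualFunction_sub_le_inner {δ : ℝ} {θ : Θ} {l l' : EuclideanSpace ℝ ι}
    (hbdd : BddAbove (Set.range fun θ => lagrangian V₀ V c θ l'))
    (happrox : dualFunction V₀ V c l ≤ lagrangian V₀ V c θ l + δ) :
    dualFunction V₀ V c l - dualFunction V₀ V c l' - δ ≤
      inner ℝ (l - l') (constraintSlack V c θ) := by
  have hl' : lagrangian V₀ V c θ l' ≤ dualFunction V₀ V c l' := le_csSup hbdd ⟨θ, rfl⟩
  linarith [lagrangian_sub_lagrangian (V₀ := V₀) (V := V) (c := c) θ l l']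

end Lagrangian

theorem dual_descent_convergence_general
    {Θ : Type*} {m : ℕ}
    (V₀ : Θ → ℝ) (V : Θ → Fin m → ℝ) (c : Fin m → ℝ)
    (hbdd : ∀ l : EuclideanSpace ℝ (Fin m), (∀ i, 0 ≤ l i) →
      BddAbove (Set.range fun θ => V₀ θ + ∑ i, l i * (V θ i - c i)))
    (δ : ℝ)
    (θd : EuclideanSpace ℝ (Fin m) → Θ)
    (happrox : ∀ l : EuclideanSpace ℝ (Fin m), (∀ i, 0 ≤ l i) →
      sSup (Set.range fun θ => V₀ θ + ∑ i, l i * (V θ i - c i)) ≤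
        (V₀ (θd l) + ∑ i, l i * (V (θd l) i - c i)) + δ)
    (B : ℝ)
    (hB : ∀ l : EuclideanSpace ℝ (Fin m), (∀ i, 0 ≤ l i) →
      ‖(show EuclideanSpace ℝ (Fin m) from WithLp.toLp 2 fun i => V (θd l) i - c i)‖ ^ 2 ≤ B)
    (η : ℝ) (hη : 0 < η)
    (lstar : EuclideanSpace ℝ (Fin m)) (hlstar : ∀ i, 0 ≤ lstar i)
    (lam : ℕ → EuclideanSpace ℝ (Fin m))
    (hlam0 : lam 0 = 0)
    (hstep : ∀ k, ∀ i, lam (k + 1) i =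
      max (lam k i - η * (V (θd (lam k)) i - c i)) 0) :
    ∀ ε : ℝ, 0 < ε → ∃ K : ℕ,
      (K : ℝ) ≤ ‖lam 0 - lstar‖ ^ 2 / (2 * η * ε) ∧
      sSup (Set.range fun θ => V₀ θ + ∑ i, (lam K) i * (V θ i - c i)) ≤
        sSup (Set.range fun θ => V₀ θ + ∑ i, lstar i * (V θ i - c i)) +
          η * B / 2 + δ + ε := by
  intro ε hε
  let d := dualFunction V₀ V c
  have hnonneg : ∀ k i, 0 ≤ lam k i := by
    intro k i
    cases k with
    | zero => simp [hlam0]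
    | succ k => exact hstep k i ▸ le_max_right _ _
  have hdescent : ∀ k, ‖lam (k + 1) - lstar‖ ^ 2 ≤
      ‖lam k - lstar‖ ^ 2 - 2 * η * (d (lam k) - (d lstar + η * B / 2 + δ)) := by
    intro k
    have hproj : ‖lam (k + 1) - lstar‖ ^ 2 ≤
        ‖lam k - η • constraintSlack V c (θd (lam k)) - lstar‖ ^ 2 :=
      EuclideanSpace.norm_sub_sq_le_of_eq_max_zero
        (by simpa [constraintSlack] using hstep k) hlstar
    have hdist := norm_sub_sq_le_of_projected_step hη.le hproj
      (dualFunction_sub_le_inner (hbdd lstar hlstar) (happrox _ (hnonneg k))) (hB _ (hnonneg k))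
    linarith [hdist]
  obtain ⟨K, hK, hdK⟩ := exists_le_of_descent (fun k => sq_nonneg ‖lam k - lstar‖)
    (by positivity : 0 < 2 * η) hε hdescent
  refine ⟨K, hK, ?_⟩
  change d (lam K) ≤ d lstar + η * B / 2 + δ + ε
  linarith

/-- **Theorem 3 (convergence of Algorithm 1, dualDescent).** The projected
approximate dual (sub)gradient iteration
`λ_{k+1} = [λ_k − η (V(θ†(λ_k)) − c)]₊` started at `λ₀ = 0` reaches, within at
most `‖λ₀ − λ*‖²/(2ηε)` steps, a multiplier whose dual value is within
`ηB/2 + δ + ε` of the optimal dual value `d(λ*)`. -/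
theorem dual_descent_convergence
    {Θ : Type*} [Nonempty Θ] {m : ℕ}
    (V₀ : Θ → ℝ) (V : Θ → Fin m → ℝ) (c : Fin m → ℝ)
    (hbdd : ∀ l : EuclideanSpace ℝ (Fin m), (∀ i, 0 ≤ l i) →
      BddAbove (Set.range fun θ => V₀ θ + ∑ i, l i * (V θ i - c i)))
    (δ : ℝ) (hδ : 0 ≤ δ)
    (θd : EuclideanSpace ℝ (Fin m) → Θ)
    (happrox : ∀ l : EuclideanSpace ℝ (Fin m), (∀ i, 0 ≤ l i) →
      sSup (Set.range fun θ => V₀ θ + ∑ i, l i * (V θ i - c i)) ≤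
        (V₀ (θd l) + ∑ i, l i * (V (θd l) i - c i)) + δ)
    (B : ℝ)
    (hB : ∀ l : EuclideanSpace ℝ (Fin m), (∀ i, 0 ≤ l i) →
      ‖(show EuclideanSpace ℝ (Fin m) from WithLp.toLp 2 fun i => V (θd l) i - c i)‖ ^ 2 ≤ B)
    (η : ℝ) (hη : 0 < η)
    (lstar : EuclideanSpace ℝ (Fin m)) (hlstar : ∀ i, 0 ≤ lstar i)
    (hlstaropt : sSup (Set.range fun θ => V₀ θ + ∑ i, lstar i * (V θ i - c i)) =
      sInf {y : ℝ | ∃ l : EuclideanSpace ℝ (Fin m), (∀ i, 0 ≤ l i) ∧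
        y = sSup (Set.range fun θ => V₀ θ + ∑ i, l i * (V θ i - c i))})
    (lam : ℕ → EuclideanSpace ℝ (Fin m))
    (hlam0 : lam 0 = 0)
    (hstep : ∀ k, ∀ i, lam (k + 1) i =
      max (lam k i - η * (V (θd (lam k)) i - c i)) 0) :
    ∀ ε : ℝ, 0 < ε → ∃ K : ℕ,
      (K : ℝ) ≤ ‖lam 0 - lstar‖ ^ 2 / (2 * η * ε) ∧
      sSup (Set.range fun θ => V₀ θ + ∑ i, (lam K) i * (V θ i - c i)) ≤
        sSup (Set.range fun θ => V₀ θ + ∑ i, lstar i * (V θ i - c i)) +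
          η * B / 2 + δ + ε :=
  dual_descent_convergence_general V₀ V c hbdd δ θd happrox B hB η hη lstar hlstar lam hlam0 hstep
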